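/- Let M* be an optimal perfect matching for the minimum top-k weight objective, let t = w(e_k) where e_k is the k-th heaviest edge of M*, and let M be any perfect matching with w_t(M) ≤ w_t(M*), where w_t(e) = max(w(e) − t, 0). Then w^k(M) ≤ w^k(M*), i.e., M is also optimal for the minimum top-k objective. -/

import Mathlib

/-- The top-`k` weight of a multiset of natural numbers:
the sum of its `k` largest elements. -/
def topk (S : Multiset ℕ) (k : ℕ) : ℕ :=
  ((S.sort (· ≤ ·)).reverse.take k).sum

/-- The elements of a multiset of naturals, sorted in decreasing order. -/
def sortedDesc (S : Multiset ℕ) : List ℕ :=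
  (S.sort (· ≤ ·)).reverse

/-- `M` is a perfect matching of `G`, viewed as a finite set of edges:
its edges are edges of `G` and every vertex lies on exactly one of them. -/
def IsPM {V : Type*} (G : SimpleGraph V) (M : Finset (Sym2 V)) : Prop :=
  (↑M : Set (Sym2 V)) ⊆ G.edgeSet ∧ ∀ v : V, ∃! e, e ∈ M ∧ v ∈ e

/-!
Let `t` be the `k`-th largest weight of `M*`. Clipping every weight at `t` (keeping `w e - t`)
loses at most `t` on each of the `k` largest weights of any `M`, so
`w^k(M) ≤ w_t(M) + k t`. For `M*` this is an equality: its `k` largest weights are at least `t`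
and all others at most `t`, so `w_t(M*) = w^k(M*) - k t`. Hence
`w^k(M) ≤ w_t(M) + k t ≤ w_t(M*) + k t = w^k(M*)`.
-/

namespace List

theorem sum_take_le_sum_map_tsub_add_mul (t : ℕ) :
    ∀ (l : List ℕ) (k : ℕ), (l.take k).sum ≤ (l.map (· - t)).sum + k * t
  | [], _ => by simp
  | _ :: _, 0 => by simp
  | x :: l, k + 1 => by
    have := sum_take_le_sum_map_tsub_add_mul t l k
    simp only [take_succ_cons, sum_cons, map_cons, Nat.succ_mul]
    omega

theorem sum_map_tsub_add_length_mul {l : List ℕ} {t : ℕ} (h : ∀ x ∈ l, t ≤ x) :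
    (l.map (· - t)).sum + l.length * t = l.sum := by
  rw [← smul_eq_mul, ← sum_replicate, ← map_const', ← sum_map_add]
  conv_rhs => rw [← map_id l]
  exact congrArg sum (map_congr_left fun x hx => Nat.sub_add_cancel (h x hx))

theorem sum_map_tsub_add_mul_eq_sum_take {l : List ℕ} {k t : ℕ} (hk : k ≤ l.length)
    (h_take : ∀ x ∈ l.take k, t ≤ x) (h_drop : ∀ x ∈ l.drop k, x ≤ t) :
    (l.map (· - t)).sum + k * t = (l.take k).sum := by
  have h_drop_zero : ((l.drop k).map (· - t)).sum = 0 :=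
    sum_eq_zero fun y hy => by
      obtain ⟨x, hx, rfl⟩ := mem_map.mp hy
      exact Nat.sub_eq_zero_of_le (h_drop x hx)
  conv_lhs => rw [← take_append_drop k l, map_append, sum_append, h_drop_zero, add_zero]
  rw [← sum_map_tsub_add_length_mul h_take, length_take_of_le hk]

theorem sum_take_eq_sum_map_tsub_getD_add_mul {l : List ℕ} (hl : l.Pairwise (· ≥ ·)) (k : ℕ) :
    (l.take k).sum = (l.map (· - l.getD (k - 1) 0)).sum + k * l.getD (k - 1) 0 := by
  rcases le_or_gt k l.length with hk | hk
  · have hmono : ∀ i j (hij : i ≤ j) (hj : j < l.length), l[j] ≤ l[i] := by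
      intro i j hij hj
      rcases hij.lt_or_eq with hij | rfl
      · exact pairwise_iff_getElem.mp hl i j _ hj hij
      · exact le_rfl
    refine (sum_map_tsub_add_mul_eq_sum_take hk ?_ ?_).symm
    · intro x hx
      obtain ⟨j, hj, rfl⟩ := mem_take_iff_getElem.mp hx
      rw [getD_eq_getElem _ _ (by omega)]
      exact hmono _ _ (by omega) _
    · intro x hx
      obtain ⟨j, hj, rfl⟩ := mem_drop_iff_getElem.mp hx
      rw [getD_eq_getElem _ _ (by omega)]
      exact hmono _ _ (by omega) _
  · rw [getD_eq_default _ _ (by omega), take_of_length_le hk.le]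
    simp

end List

theorem pairwise_sortedDesc (S : Multiset ℕ) : (sortedDesc S).Pairwise (· ≥ ·) :=
  List.pairwise_reverse.mpr (Multiset.pairwise_sort S _)

theorem sum_map_sortedDesc (S : Multiset ℕ) (f : ℕ → ℕ) :
    ((sortedDesc S).map f).sum = (S.map f).sum := by
  rw [← Multiset.sum_coe, ← Multiset.map_coe, sortedDesc, Multiset.coe_reverse, Multiset.sort_eq]

theorem topk_le_sum_map_tsub_add_mul (S : Multiset ℕ) (k t : ℕ) :
    topk S k ≤ (S.map (· - t)).sum + k * t := by
  rw [← sum_map_sortedDesc]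
  exact List.sum_take_le_sum_map_tsub_add_mul t _ k

theorem topk_eq_sum_map_tsub_add_mul (S : Multiset ℕ) (k : ℕ) :
    topk S k = (S.map (· - (sortedDesc S).getD (k - 1) 0)).sum
      + k * (sortedDesc S).getD (k - 1) 0 := by
  rw [← sum_map_sortedDesc]
  exact List.sum_take_eq_sum_map_tsub_getD_add_mul (pairwise_sortedDesc S) k

theorem stmt_16_general {V : Type*}
    (w : Sym2 V → ℕ) (k : ℕ)
    (Mstar M : Finset (Sym2 V))
    (t : ℕ) (ht : t = (sortedDesc (Mstar.val.map w)).getD (k - 1) 0)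
    (hthr : ∑ e ∈ M, (w e - t) ≤ ∑ e ∈ Mstar, (w e - t)) :
    topk (M.val.map w) k ≤ topk (Mstar.val.map w) k := by
  calc topk (M.val.map w) k ≤ ((M.val.map w).map (· - t)).sum + k * t :=
        topk_le_sum_map_tsub_add_mul _ k t
    _ ≤ ((Mstar.val.map w).map (· - t)).sum + k * t := by
        simpa only [Finset.sum_eq_multiset_sum, Multiset.map_map, Function.comp_def] using
          Nat.add_le_add_right hthr _
    _ = topk (Mstar.val.map w) k := by rw [ht, topk_eq_sum_map_tsub_add_mul]

/-- Core of `minTkPM ≡ minWPM`: if `M*` is optimal for the minimum top-`k` objective,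
`t` is the weight of the `k`-th heaviest edge of `M*`, and `M` is a perfect matching whose
total thresholded weight is at most that of `M*`, then `M` is also optimal, i.e.
`w^k(M) ≤ w^k(M*)`. -/
theorem stmt_16 {V : Type*} [DecidableEq V] (G : SimpleGraph V)
    (w : Sym2 V → ℕ) (k : ℕ)
    (Mstar M : Finset (Sym2 V)) (hMs : IsPM G Mstar) (hM : IsPM G M)
    (hopt : ∀ N : Finset (Sym2 V), IsPM G N →
      topk (Mstar.val.map w) k ≤ topk (N.val.map w) k)
    (hk : k ≤ Mstar.card)
    (t : ℕ) (ht : t = (sortedDesc (Mstar.val.map w)).getD (k - 1) 0)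
    (hthr : ∑ e ∈ M, (w e - t) ≤ ∑ e ∈ Mstar, (w e - t)) :
    topk (M.val.map w) k ≤ topk (Mstar.val.map w) k :=
  stmt_16_general w k Mstar M t ht hthr
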